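/- arXiv:2307.09214 — 5 statements merged into one kernel-verified Lean document; each statement's English description precedes it below -/
import Mathlib

section
/- Let 𝒟 = [n_1] × … × [n_d] be a d-dimensional grid graph (all n_i ≥ 2). If ∏_{i=1}^{d} n_i is odd, then for every sensing range V ≥ 1 there is no agent algorithm with 0 bits of memory and sensing range V that patrols 𝒟. -/
open Finset

/-- Manhattan (ℓ¹) norm of an integer vector. -/
def manhattan {d : ℕ} (p : Fin d → ℤ) : ℤ := ∑ i, |p i|

/-- The grid graph vertex set `[n 0] × ⋯ × [n (d-1)]`. -/
def grid {d : ℕ} (n : Fin d → ℕ) : Set (Fin d → ℤ) :=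
  {p | ∀ i, 1 ≤ p i ∧ p i ≤ (n i : ℤ)}

/-- Sensing data `S_V(p)`: relative positions of points of `D` within
Manhattan distance `V` of `p`. -/
def sense {d : ℕ} (D : Set (Fin d → ℤ)) (V : ℕ) (p : Fin d → ℤ) : Set (Fin d → ℤ) :=
  {q | p + q ∈ D ∧ manhattan q ≤ (V : ℤ)}

/-- A deterministic agent algorithm with `b` bits of memory: maps sensing data and a
memory state to a step and a new memory state. -/
structure Agent (d b : ℕ) where
  act : Set (Fin d → ℤ) → (Fin b → Bool) → (Fin d → ℤ) × (Fin b → Bool)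

namespace Agent

/-- Validity: at every vertex of `D`, in every memory state, the chosen step is a
unit step leading to a vertex of `D`. -/
def Valid {d b : ℕ} (A : Agent d b) (D : Set (Fin d → ℤ)) (V : ℕ) : Prop :=
  ∀ p ∈ D, ∀ m, manhattan (A.act (sense D V p) m).1 = 1 ∧
    (A.act (sense D V p) m).1 ∈ sense D V p

/-- The trajectory (position, memory) of the agent after `t` steps, starting from
position `v` and memory state `m`. -/
def traj {d b : ℕ} (A : Agent d b) (D : Set (Fin d → ℤ)) (V : ℕ)
    (v : Fin d → ℤ) (m : Fin b → Bool) : ℕ → (Fin d → ℤ) × (Fin b → Bool)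
  | 0 => (v, m)
  | t + 1 =>
      let s := Agent.traj A D V v m t
      (s.1 + (A.act (sense D V s.1) s.2).1, (A.act (sense D V s.1) s.2).2)

/-- The agent patrols `D`: it is valid, and from any initial position in `D` and any
initial memory state, its trajectory visits every vertex of `D` within finitely many
steps. -/
def Patrols {d b : ℕ} (A : Agent d b) (D : Set (Fin d → ℤ)) (V : ℕ) : Prop :=
  A.Valid D V ∧ ∀ v₁ ∈ D, ∀ m, ∀ v ∈ D, ∃ t, (A.traj D V v₁ m t).1 = v

end Agent

/-- The graph on a set of integer vectors with edges between points at Manhattan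
distance 1. -/
def latticeGraph {d : ℕ} (S : Set (Fin d → ℤ)) : SimpleGraph S where
  Adj p q := manhattan (p.1 - q.1) = 1
  symm := by
    constructor
    intro p q h
    simp only [manhattan, Pi.sub_apply] at h ⊢
    simpa [abs_sub_comm] using h
  loopless := by
    constructor
    intro p h
    simp [manhattan] at h

/-- The `d`-dimensional grid graph `[n 0] × ⋯ × [n (d-1)]`. -/
def gridGraph {d : ℕ} (n : Fin d → ℕ) : SimpleGraph (grid n) :=
  latticeGraph (grid n)

/-!
Without memory the agent's step is a function `g` of its position alone. If the agent
patrols, the forward orbit of every vertex under `g` is the whole grid, so the grid is a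
single cycle of `g` and its length is `∏ nᵢ`. A unit step changes the parity of the
coordinate sum, so every cycle of `g` has even length.
-/

open Function

section Dynamics

variable {α : Type*} (f : α → α)

theorem mem_periodicPts_of_forall_iterate (hcover : ∀ x v : α, ∃ t, f^[t] x = v) (x : α) :
    x ∈ periodicPts f := by
  obtain ⟨t, ht⟩ := hcover (f x) x
  exact mk_mem_periodicPts t.succ_pos (by rwa [IsPeriodicPt, IsFixedPt, iterate_succ_apply])

theorem minimalPeriod_eq_natCard_of_forall_iterate {x : α} (hx : x ∈ periodicPts f)
    (hcover : ∀ v, ∃ t, f^[t] x = v) : minimalPeriod f x = Nat.card α := by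
  have hbij : Bijective fun t : Fin (minimalPeriod f x) => f^[t] x := by
    refine ⟨fun s t hst => Fin.ext (iterate_injOn_Iio_minimalPeriod s.2 t.2 hst), fun v => ?_⟩
    obtain ⟨t, rfl⟩ := hcover v
    exact ⟨⟨t % minimalPeriod f x, Nat.mod_lt _ (minimalPeriod_pos_of_mem_periodicPts hx)⟩,
      iterate_mod_minimalPeriod_eq⟩
  simpa using Nat.card_eq_of_bijective _ hbij

theorem even_minimalPeriod_of_map_eq_add_one (φ : α → ZMod 2) (hφ : ∀ x, φ (f x) = φ x + 1)
    (x : α) : Even (minimalPeriod f x) := by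
  have hsemiconj : Semiconj φ f (· + 1) := hφ
  have hreturn := (hsemiconj.iterate_right (minimalPeriod f x)).eq x
  rw [iterate_minimalPeriod, add_right_iterate_apply, nsmul_one, left_eq_add] at hreturn
  exact ZMod.natCast_eq_zero_iff_even.1 hreturn

theorem even_natCard_of_map_eq_add_one (φ : α → ZMod 2) (hφ : ∀ x, φ (f x) = φ x + 1)
    (hcover : ∀ x v : α, ∃ t, f^[t] x = v) : Even (Nat.card α) := by
  rcases isEmpty_or_nonempty α with _ | ⟨⟨x⟩⟩
  · simp
  · rw [← minimalPeriod_eq_natCard_of_forall_iterate f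
      (mem_periodicPts_of_forall_iterate f hcover x) (hcover x)]
    exact even_minimalPeriod_of_map_eq_add_one f φ hφ x

end Dynamics

section Lattice

variable {d : ℕ}

def coordSumParity (p : Fin d → ℤ) : ZMod 2 := ∑ i, (p i : ZMod 2)

theorem coordSumParity_add (p q : Fin d → ℤ) :
    coordSumParity (p + q) = coordSumParity p + coordSumParity q := by
  simp only [coordSumParity, Pi.add_apply, Int.cast_add, sum_add_distrib]

theorem coordSumParity_eq_manhattan (p : Fin d → ℤ) :
    coordSumParity p = (manhattan p : ZMod 2) := by
  simp only [coordSumParity, manhattan, Int.cast_sum, ZMod.intCast_abs_mod_two]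

theorem grid_eq_pi (n : Fin d → ℕ) : grid n = Set.univ.pi fun i => Set.Icc (1 : ℤ) (n i) := by
  ext p
  simp only [grid, Set.mem_ofPred_eq, Set.mem_univ_pi, Set.mem_Icc]

theorem Nat.card_grid (n : Fin d → ℕ) : Nat.card (grid n) = ∏ i, n i := by
  rw [grid_eq_pi, Nat.card_congr (Equiv.Set.univPi _), Nat.card_pi]
  refine prod_congr rfl fun i _ => ?_
  simp

end Lattice

namespace Agent

variable {d : ℕ} {D : Set (Fin d → ℤ)} {V : ℕ} (A : Agent d 0)

def move (hA : A.Valid D V) (p : D) : D :=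
  ⟨p + (A.act (sense D V p) default).1, (hA p p.2 default).2.1⟩

theorem traj_eq_iterate_move (hA : A.Valid D V) (p : D) (m : Fin 0 → Bool) (t : ℕ) :
    (A.traj D V p m t).1 = ((A.move hA)^[t] p : D) := by
  induction t with
  | zero => rfl
  | succ t ih =>
    rw [iterate_succ_apply']
    show (A.traj D V p m t).1 + (A.act _ (A.traj D V p m t).2).1 = _
    rw [Subsingleton.elim (A.traj D V p m t).2 default, ih]
    rfl

theorem coordSumParity_move (hA : A.Valid D V) (p : D) :
    coordSumParity (A.move hA p : Fin d → ℤ) = coordSumParity (p : Fin d → ℤ) + 1 := by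
  rw [move, coordSumParity_add, coordSumParity_eq_manhattan (A.act _ _).1,
    (hA p p.2 default).1, Int.cast_one]

theorem Patrols.forall_iterate_move (h : A.Patrols D V) (x v : D) :
    ∃ t, (A.move h.1)^[t] x = v := by
  obtain ⟨t, ht⟩ := h.2 x x.2 default v v.2
  exact ⟨t, Subtype.ext (by rw [← ht, traj_eq_iterate_move])⟩

end Agent

theorem no_zero_bit_patrol_of_odd_product_general {d : ℕ} (n : Fin d → ℕ) (hodd : Odd (∏ i, n i)) :
    ∀ V : ℕ, 1 ≤ V → ¬ ∃ A : Agent d 0, A.Patrols (grid n) V := by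
  rintro V - ⟨A, hA⟩
  have heven : Even (Nat.card (grid n)) :=
    even_natCard_of_map_eq_add_one (A.move hA.1) (fun p => coordSumParity (p : Fin d → ℤ))
      (A.coordSumParity_move hA.1) hA.forall_iterate_move
  rw [Nat.card_grid] at heven
  exact Nat.not_even_iff_odd.2 hodd heven

/-- If `∏ i, n i` is odd then for every sensing range `V ≥ 1` no
agent algorithm with `0` bits of memory patrols the grid `[n 0] × ⋯ × [n (d-1)]`. -/
theorem no_zero_bit_patrol_of_odd_product {d : ℕ} (hd : 1 ≤ d) (n : Fin d → ℕ)
    (hn : ∀ i, 2 ≤ n i) (hodd : Odd (∏ i, n i)) :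
    ∀ V : ℕ, 1 ≤ V → ¬ ∃ A : Agent d 0, A.Patrols (grid n) V :=
  no_zero_bit_patrol_of_odd_product_general n hodd
end

section
/- Let 𝒟 = [n_1] × … × [n_d] be a d-dimensional grid graph (all n_i ≥ 2) and let V ≥ 1. If there exist distinct indices i ≠ j with n_i > 2V + 1 and n_j > 2V + 1, then no agent algorithm with 0 bits of memory and sensing range V patrols 𝒟. -/
open Finset

/-!
A memoryless agent is the dynamical system `p ↦ p + σ(S_V(p))` on the grid. If it patrols, every
vertex is periodic, so the map is injective. In a coordinate `j` with `n j > 2V + 1`, the points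
with `p j = V + 1` and their shifts by `e_j` have the same sensing data, so the map commutes with
`+ e_j` on that layer. Injectivity then forbids leaving the layer once the agent has made one move
inside it: the orbit would never reach the points off the layer. Hence at a vertex lying in this
layer for two large coordinates `i ≠ j`, the step must change both coordinates `i` and `j`, which
a unit step cannot do.
-/

open Set Function

section Manhattan

variable {d : ℕ}

lemma abs_add_abs_le_manhattan {i j : Fin d} (hij : i ≠ j) (s : Fin d → ℤ) :
    |s i| + |s j| ≤ manhattan s := by
  rw [← Finset.sum_pair (f := fun k => |s k|) hij]
  exact Finset.sum_le_sum_of_subset_of_nonneg (Finset.subset_univ _) fun k _ _ => abs_nonneg _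

lemma abs_le_manhattan (s : Fin d → ℤ) (k : Fin d) : |s k| ≤ manhattan s :=
  Finset.single_le_sum (fun m _ => abs_nonneg (s m)) (Finset.mem_univ k)

lemma apply_eq_zero_or_apply_eq_zero_of_manhattan_eq_one {s : Fin d → ℤ} (h : manhattan s = 1)
    {i j : Fin d} (hij : i ≠ j) : s i = 0 ∨ s j = 0 := by
  have := abs_add_abs_le_manhattan hij s
  by_contra! hne
  linarith [Int.one_le_abs hne.1, Int.one_le_abs hne.2]

lemma eq_single_of_manhattan_eq_one {s : Fin d → ℤ} (h : manhattan s = 1) {k : Fin d}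
    (hk : s k ≠ 0) : s = Pi.single k 1 ∨ s = Pi.single k (-1) := by
  have hk1 : 1 ≤ |s k| := Int.one_le_abs hk
  have hrest : ∀ m, m ≠ k → s m = 0 := fun m hm =>
    (apply_eq_zero_or_apply_eq_zero_of_manhattan_eq_one h hm).resolve_right hk
  have hsk : s = Pi.single k (s k) := funext fun m => by
    by_cases hm : m = k
    · subst hm; simp
    · rw [Pi.single_eq_of_ne hm, hrest m hm]
  have : |s k| = 1 := le_antisymm (h ▸ abs_le_manhattan s k) hk1
  rcases abs_eq (zero_le_one' ℤ) |>.1 this with h1 | h1 <;> rw [h1] at hsk <;> tauto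

end Manhattan

section Grid

variable {d : ℕ} {n : Fin d → ℕ} {j : Fin d}

lemma add_single_one_mem_grid_iff {x : Fin d → ℤ} (h1 : 1 ≤ x j) (h2 : x j < n j) :
    x + Pi.single j 1 ∈ grid n ↔ x ∈ grid n := by
  simp only [grid, mem_ofPred_eq, Pi.add_apply, Pi.single_apply]
  refine forall_congr' fun k => ?_
  split_ifs with hk
  · subst hk; omega
  · simp

lemma sense_grid_add_single_one {V : ℕ} {p : Fin d → ℤ} (h1 : V + 1 ≤ p j)
    (h2 : p j + V + 1 ≤ n j) :
    sense (grid n) V (p + Pi.single j 1) = sense (grid n) V p := by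
  ext q
  simp only [sense, mem_ofPred_eq, add_right_comm p]
  refine and_congr_left fun hq => add_single_one_mem_grid_iff ?_ ?_ <;>
  · have := abs_le.1 ((abs_le_manhattan q j).trans hq)
    simp only [Pi.add_apply]
    omega

end Grid

section UnitStepDynamics

variable {d : ℕ} {S : Set (Fin d → ℤ)} {F : (Fin d → ℤ) → Fin d → ℤ} {j : Fin d} {c : ℤ}

structure IsShiftLayer (S : Set (Fin d → ℤ)) (F : (Fin d → ℤ) → Fin d → ℤ) (j : Fin d) (c : ℤ) :
    Prop where
  mapsTo : MapsTo F S S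
  injOn : InjOn F S
  manhattan_sub : ∀ p ∈ S, manhattan (F p - p) = 1
  add_single_mem : ∀ p ∈ S, p j = c → p + Pi.single j 1 ∈ S
  apply_add_single : ∀ p ∈ S, p j = c → F (p + Pi.single j 1) = F p + Pi.single j 1

namespace IsShiftLayer

lemma apply_apply_eq (hF : IsShiftLayer S F j c) {q : Fin d → ℤ} (hq : q ∈ S) (hqj : q j = c)
    (hFq : F q j = c) : F (F q) j = c := by
  set r := F q
  have hr : r ∈ S := hF.mapsTo hq
  by_contra hne
  have hstep : (F r - r) j ≠ 0 := by simpa [Pi.sub_apply, sub_eq_zero, hFq] using hne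
  rcases eq_single_of_manhattan_eq_one (hF.manhattan_sub r hr) hstep with hup | hdown
  · -- `F` maps `q + e_j` and `r` to the same point `r + e_j`
    have h := hF.injOn (hF.add_single_mem q hq hqj) hr
      (by rw [hF.apply_add_single q hq hqj, ← hup, add_sub_cancel])
    have := congrFun h j
    simp [hqj, hFq] at this
  · -- `F` maps `r + e_j` and `q` to the same point `r`
    have h := hF.injOn (hF.add_single_mem r hr hFq) hq
      (by rw [hF.apply_add_single r hr hFq, eq_add_of_sub_eq hdown, add_right_comm,
        ← Pi.single_add]; simp [r])
    have := congrFun h j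
    simp [hqj, hFq] at this

lemma iterate_apply_eq (hF : IsShiftLayer S F j c) {q : Fin d → ℤ} (hq : q ∈ S) (hqj : q j = c)
    (hFq : F q j = c) (t : ℕ) : (F^[t] q) j = c := by
  suffices ∀ t, F^[t] q ∈ S ∧ (F^[t] q) j = c ∧ F (F^[t] q) j = c from (this t).2.1
  intro t
  induction t with
  | zero => exact ⟨hq, hqj, hFq⟩
  | succ t ih =>
    obtain ⟨hS, hj, hFj⟩ := ih
    rw [iterate_succ_apply']
    exact ⟨hF.mapsTo hS, hFj, hF.apply_apply_eq hS hj hFj⟩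

lemma apply_ne (hF : IsShiftLayer S F j c) {p : Fin d → ℤ} (hp : p ∈ S) (hpj : p j = c)
    (hcover : ∀ w ∈ S, ∃ t, F^[t] p = w) : F p j ≠ c := by
  intro hFp
  obtain ⟨t, ht⟩ := hcover _ (hF.add_single_mem p hp hpj)
  have := hF.iterate_apply_eq hp hpj hFp t
  rw [ht] at this
  simp [hpj] at this

end IsShiftLayer

end UnitStepDynamics

namespace Agent

variable {d : ℕ} {D : Set (Fin d → ℤ)} {V : ℕ}

def stepMap (A : Agent d 0) (D : Set (Fin d → ℤ)) (V : ℕ) (p : Fin d → ℤ) : Fin d → ℤ :=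
  p + (A.act (sense D V p) isEmptyElim).1

lemma traj_fst_eq_iterate_stepMap (A : Agent d 0) (v : Fin d → ℤ) (m : Fin 0 → Bool) (t : ℕ) :
    (A.traj D V v m t).1 = (A.stepMap D V)^[t] v := by
  induction t with
  | zero => rfl
  | succ t ih =>
    rw [iterate_succ_apply', ← ih, stepMap, ← Subsingleton.elim (A.traj D V v m t).2 isEmptyElim]
    rfl

lemma stepMap_add_of_sense_eq (A : Agent d 0) {p e : Fin d → ℤ}
    (h : sense D V (p + e) = sense D V p) : A.stepMap D V (p + e) = A.stepMap D V p + e := by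
  rw [stepMap, stepMap, h, add_right_comm]

lemma Valid.stepMap_mem {A : Agent d 0} (hA : A.Valid D V) {p : Fin d → ℤ} (hp : p ∈ D) :
    A.stepMap D V p ∈ D :=
  ((hA p hp isEmptyElim).2).1

lemma Valid.manhattan_stepMap_sub {A : Agent d 0} (hA : A.Valid D V) {p : Fin d → ℤ}
    (hp : p ∈ D) : manhattan (A.stepMap D V p - p) = 1 := by
  rw [stepMap, add_sub_cancel_left]
  exact (hA p hp isEmptyElim).1

lemma Patrols.exists_iterate_stepMap_eq {A : Agent d 0} (hA : A.Patrols D V) {v w : Fin d → ℤ}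
    (hv : v ∈ D) (hw : w ∈ D) : ∃ t, (A.stepMap D V)^[t] v = w := by
  obtain ⟨t, ht⟩ := hA.2 v hv isEmptyElim w hw
  exact ⟨t, by rwa [traj_fst_eq_iterate_stepMap] at ht⟩

lemma Patrols.injOn_stepMap {A : Agent d 0} (hA : A.Patrols D V) :
    InjOn (A.stepMap D V) D := by
  refine (bijOn_periodicPts _).injOn.mono fun p hp => ?_
  obtain ⟨t, ht⟩ := hA.exists_iterate_stepMap_eq (hA.1.stepMap_mem hp) hp
  exact mk_mem_periodicPts t.succ_pos (by rwa [IsPeriodicPt, IsFixedPt, iterate_succ_apply])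

lemma Patrols.stepMap_apply_ne {n : Fin d → ℕ} {A : Agent d 0} (hA : A.Patrols (grid n) V)
    {j : Fin d} (hj : 2 * V + 1 < n j) {p : Fin d → ℤ} (hp : p ∈ grid n) (hpj : p j = V + 1) :
    A.stepMap (grid n) V p j ≠ V + 1 := by
  have hlayer : IsShiftLayer (grid n) (A.stepMap (grid n) V) j (V + 1) :=
    { mapsTo := fun _ => hA.1.stepMap_mem
      injOn := hA.injOn_stepMap
      manhattan_sub := fun _ => hA.1.manhattan_stepMap_sub
      add_single_mem := fun q hq hqj => (add_single_one_mem_grid_iff (hq j).1 (by omega)).2 hq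
      apply_add_single := fun q _ hqj =>
        A.stepMap_add_of_sense_eq (sense_grid_add_single_one (by omega) (by omega)) }
  exact hlayer.apply_ne hp hpj fun w hw => hA.exists_iterate_stepMap_eq hp hw

end Agent

theorem no_zero_bit_patrol_of_two_large_dims_general {d : ℕ} (n : Fin d → ℕ)
    (hn : ∀ i, 2 ≤ n i) (V : ℕ)
    (i j : Fin d) (hij : i ≠ j) (hi : 2 * V + 1 < n i) (hj : 2 * V + 1 < n j) :
    ¬ ∃ A : Agent d 0, A.Patrols (grid n) V := by
  rintro ⟨A, hA⟩
  let p : Fin d → ℤ := fun k => if k = i ∨ k = j then V + 1 else 1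
  have hp : p ∈ grid n := fun k => by
    have := hn k
    simp only [p]
    split_ifs with hk
    · rcases hk with rfl | rfl <;> omega
    · omega
  rcases apply_eq_zero_or_apply_eq_zero_of_manhattan_eq_one
    (hA.1.manhattan_stepMap_sub hp) hij with h | h
  · exact hA.stepMap_apply_ne hi hp (by simp [p]) (by simpa [sub_eq_zero, p] using h)
  · exact hA.stepMap_apply_ne hj hp (by simp [p]) (by simpa [sub_eq_zero, p] using h)

/-- If there are two distinct indices `i ≠ j` with `n i > 2V + 1` and
`n j > 2V + 1`, then no agent algorithm with `0` bits of memory and sensing range `V`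
patrols the grid `[n 0] × ⋯ × [n (d-1)]`. -/
theorem no_zero_bit_patrol_of_two_large_dims {d : ℕ} (hd : 1 ≤ d) (n : Fin d → ℕ)
    (hn : ∀ i, 2 ≤ n i) (V : ℕ) (hV : 1 ≤ V)
    (i j : Fin d) (hij : i ≠ j) (hi : 2 * V + 1 < n i) (hj : 2 * V + 1 < n j) :
    ¬ ∃ A : Agent d 0, A.Patrols (grid n) V :=
  no_zero_bit_patrol_of_two_large_dims_general n hn V i j hij hi hj
end

section
/- Let 𝒟 = [n_1] × … × [n_d] be a d-dimensional grid graph (all n_i ≥ 2) and let V ≥ 1. The number of sensing regions of 𝒟 with sensing range V (i.e., the number of equivalence classes of the relation p ∼ p' ⇔ S_V(p) = S_V(p')) equals ∏_{i=1}^{d} min(n_i, 2V + 1). -/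
open Finset

/-!
At a grid point `p`, the sensing data is the `ℓ¹`-ball of radius `V` cut down to the box whose
extents along axis `i` are the distances from `p i` to the two ends of `[1, n i]`, each truncated
at `V`. Since the ball contains the axis points within distance `V`, these truncated gaps can be
read back from the data. The sensing regions are therefore products of one-dimensional ones, and on
a path `[1, N]` only the `V + 1` points nearest to each end are told apart, which leaves
`min N (2V + 1)` classes.
-/

lemma abs_apply_le_manhattan {d : ℕ} (q : Fin d → ℤ) (i : Fin d) : |q i| ≤ manhattan q :=
  Finset.single_le_sum (fun j _ => abs_nonneg (q j)) (Finset.mem_univ i)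

lemma manhattan_single {d : ℕ} (i : Fin d) (c : ℤ) : manhattan (Pi.single i c) = |c| := by
  rw [manhattan, Finset.sum_eq_single i (fun j _ hj => by simp [hj]) (by simp)]
  simp

lemma Set.ncard_univ_pi {ι α : Type*} [Fintype ι] (s : ι → Set α) :
    (Set.univ.pi s).ncard = ∏ i, (s i).ncard := by
  rw [← Nat.card_coe_set_eq, Nat.card_congr (Equiv.Set.univPi s), Nat.card_pi]
  exact Finset.prod_congr rfl fun i _ => Nat.card_coe_set_eq _

def clippedGaps (N V : ℕ) (t : ℤ) : ℤ × ℤ :=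
  (min (t - 1) V, min (N - t) V)

/-- All points strictly between the first and the last `V + 1` points of `[1, N]` have the
gaps of `V + 1`. -/
lemma ncard_clippedGaps_image (N V : ℕ) :
    (clippedGaps N V '' Set.Icc 1 N).ncard = min N (2 * V + 1) := by
  set R : Finset ℤ := Finset.Icc 1 N \ Finset.Icc (V + 2) (N - V)
  have hR : ∀ t, t ∈ R ↔ (1 ≤ t ∧ t ≤ N) ∧ ¬(V + 2 ≤ t ∧ t ≤ N - V) := by
    intro t; simp [R]
  have himage : clippedGaps N V '' Set.Icc 1 N = clippedGaps N V '' R := by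
    refine (Set.image_subset_iff.mpr fun t ht => ?_).antisymm
      (Set.image_mono fun t ht => Set.mem_Icc.mpr ((hR t).mp ht).1)
    rw [Set.mem_Icc] at ht
    by_cases hmid : V + 2 ≤ t ∧ t ≤ N - V
    · refine ⟨V + 1, (hR _).mpr (by omega), ?_⟩
      simp only [clippedGaps, Prod.mk.injEq]
      omega
    · exact ⟨t, (hR t).mpr ⟨ht, hmid⟩, rfl⟩
  have hinj : Set.InjOn (clippedGaps N V) R := by
    intro t ht t' ht' h
    rw [Finset.mem_coe, hR] at ht ht'
    simp only [clippedGaps, Prod.mk.injEq] at h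
    omega
  rw [himage, hinj.ncard_image, Set.ncard_coe_finset,
    Finset.card_sdiff_of_subset (fun t ht => by simp at ht ⊢; omega),
    Int.card_Icc, Int.card_Icc]
  omega

section Profiles

variable {d : ℕ}

def gapProfile (n : Fin d → ℕ) (V : ℕ) (p : Fin d → ℤ) : Fin d → ℤ × ℤ :=
  fun i => clippedGaps (n i) V (p i)

def clippedBox (V : ℕ) (σ : Fin d → ℤ × ℤ) : Set (Fin d → ℤ) :=
  {q | manhattan q ≤ V ∧ ∀ i, -(σ i).1 ≤ q i ∧ q i ≤ (σ i).2}

lemma sense_grid_eq_clippedBox {n : Fin d → ℕ} {V : ℕ} {p : Fin d → ℤ} (hp : p ∈ grid n) :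
    sense (grid n) V p = clippedBox V (gapProfile n V p) := by
  ext q
  simp only [sense, clippedBox, grid, gapProfile, clippedGaps, Set.mem_ofPred_eq, Pi.add_apply]
  refine ⟨fun ⟨hq, hqV⟩ => ⟨hqV, fun i => ?_⟩, fun ⟨hqV, hq⟩ => ⟨fun i => ?_, hqV⟩⟩
  · have hqi := abs_le.mp ((abs_apply_le_manhattan q i).trans hqV)
    have := hq i; have := hp i
    omega
  · have := hq i; have := hp i
    omega

lemma gapProfile_image_grid (n : Fin d → ℕ) (V : ℕ) :
    gapProfile n V '' grid n = Set.univ.pi fun i => clippedGaps (n i) V '' Set.Icc 1 (n i) := by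
  ext σ
  simp only [Set.mem_image, Set.mem_pi, Set.mem_univ, true_implies]
  constructor
  · rintro ⟨p, hp, rfl⟩ i
    exact ⟨p i, hp i, rfl⟩
  · intro h
    choose p hp hσ using h
    exact ⟨p, hp, funext hσ⟩

def clippedProfiles (d V : ℕ) : Set (Fin d → ℤ × ℤ) :=
  {σ | ∀ i, 0 ≤ (σ i).1 ∧ (σ i).1 ≤ V ∧ 0 ≤ (σ i).2 ∧ (σ i).2 ≤ V}

lemma mapsTo_gapProfile_grid (n : Fin d → ℕ) (V : ℕ) :
    Set.MapsTo (gapProfile n V) (grid n) (clippedProfiles d V) := by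
  intro p hp i
  have := hp i
  simp only [gapProfile, clippedGaps]
  omega

lemma single_mem_clippedBox {V : ℕ} {σ : Fin d → ℤ × ℤ} (hσ : σ ∈ clippedProfiles d V)
    {i : Fin d} {c : ℤ} (hc : -(σ i).1 ≤ c ∧ c ≤ (σ i).2) :
    Pi.single i c ∈ clippedBox V σ := by
  refine ⟨?_, fun j => ?_⟩
  · have := hσ i
    rw [manhattan_single, abs_le]
    omega
  · rcases eq_or_ne j i with rfl | hji
    · simpa using hc
    · have := hσ j
      simp only [Pi.single_eq_of_ne hji]
      omega

lemma le_of_clippedBox_subset {V : ℕ} {σ σ' : Fin d → ℤ × ℤ} (hσ : σ ∈ clippedProfiles d V)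
    (h : clippedBox V σ ⊆ clippedBox V σ') (i : Fin d) :
    (σ i).1 ≤ (σ' i).1 ∧ (σ i).2 ≤ (σ' i).2 := by
  have hσi := hσ i
  have hneg := (h (single_mem_clippedBox hσ (i := i) (c := -(σ i).1) (by omega))).2 i
  have hpos := (h (single_mem_clippedBox hσ (i := i) (c := (σ i).2) (by omega))).2 i
  simp only [Pi.single_eq_same] at hneg hpos
  omega

lemma clippedBox_injOn (V : ℕ) : Set.InjOn (clippedBox V) (clippedProfiles d V) := by
  intro σ hσ σ' hσ' h
  funext i
  have h₁ := le_of_clippedBox_subset hσ h.le i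
  have h₂ := le_of_clippedBox_subset hσ' h.ge i
  exact Prod.ext (le_antisymm h₁.1 h₂.1) (le_antisymm h₁.2 h₂.2)

end Profiles

theorem card_sensing_regions_general {d : ℕ} (n : Fin d → ℕ) (V : ℕ) :
    Set.ncard {S : Set (Fin d → ℤ) | ∃ p ∈ grid n, S = sense (grid n) V p} =
      ∏ i, min (n i) (2 * V + 1) := by
  have hdata : {S : Set (Fin d → ℤ) | ∃ p ∈ grid n, S = sense (grid n) V p} =
      clippedBox V '' (gapProfile n V '' grid n) := by
    rw [Set.image_image]
    ext S
    simp only [Set.mem_ofPred_eq, Set.mem_image]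
    exact exists_congr fun p => and_congr_right fun hp => by
      rw [sense_grid_eq_clippedBox hp, eq_comm]
  rw [hdata, ((clippedBox_injOn V).mono (mapsTo_gapProfile_grid n V).image_subset).ncard_image,
    gapProfile_image_grid, Set.ncard_univ_pi]
  simp only [ncard_clippedGaps_image]

/-- The number of sensing regions of `𝒟 = [n 0] × ⋯ × [n (d-1)]` with
sensing range `V` (equivalently, the number of distinct sensing data values attained
on `𝒟`) equals `∏ i, min (n i) (2V + 1)`. -/
theorem card_sensing_regions {d : ℕ} (hd : 1 ≤ d) (n : Fin d → ℕ)
    (hn : ∀ i, 2 ≤ n i) (V : ℕ) (hV : 1 ≤ V) :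
    Set.ncard {S : Set (Fin d → ℤ) | ∃ p ∈ grid n, S = sense (grid n) V p} =
      ∏ i, min (n i) (2 * V + 1) :=
  card_sensing_regions_general n V
end

section
/- There is a constant C > 0 such that for every d ≥ 1 and every finite connected G ⊆ ℤ^d, there exists an agent algorithm with sensing range V = 1, at most C · diam(G) · log₂(2d) bits of memory, and steps of Manhattan norm at most 1 (the agent may stay in place), that patrols G. -/
open Finset

namespace Agent

/-- Lazy validity: at every vertex of `D`, in every memory state, the chosen step has
Manhattan norm at most 1 (the agent may stay in place) and leads to a vertex of `D`. -/
def ValidLazy {d b : ℕ} (A : Agent d b) (D : Set (Fin d → ℤ)) (V : ℕ) : Prop :=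
  ∀ p ∈ D, ∀ m, manhattan (A.act (sense D V p) m).1 ≤ 1 ∧
    p + (A.act (sense D V p) m).1 ∈ D

/-- The lazy agent patrols `D`: it is lazily valid, and from any initial position in
`D` and any initial memory state its trajectory visits every vertex of `D` within
finitely many steps. -/
def PatrolsLazy {d b : ℕ} (A : Agent d b) (D : Set (Fin d → ℤ)) (V : ℕ) : Prop :=
  A.ValidLazy D V ∧ ∀ v₁ ∈ D, ∀ m, ∀ v ∈ D, ∃ t, (A.traj D V v₁ m t).1 = v

end Agent

/-!
Fix a closed walk `w` through all of `G` of length at most `2 · diam G · |G|` (out-and-back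
walks from a base point); since `|G| ≤ (2d+1)^diam G`, an index into `w` fits in
`O(diam G · log (2d))` bits.  The agent guesses the tour index `r` of its current position and
follows `w` from `w r` for as long as what it senses agrees with what it would sense on `w`; on a
disagreement it walks back and tries `r + 1`.  The true index is eventually tried, and a guess
that is never contradicted is correct: the agent then moves along `w + v` for a fixed offset `v`,
so `G + v ⊆ G`, which forces `v = 0` because `G` is finite.
-/

theorem eq_zero_of_forall_add_mem {ι α : Type*} [AddCommGroup α] [LinearOrder α]
    [IsOrderedAddMonoid α] {G : Set (ι → α)} (hfin : G.Finite) (hne : G.Nonempty)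
    {v : ι → α} (hv : ∀ g ∈ G, g + v ∈ G) : v = 0 := by
  funext j
  obtain ⟨g, hg, hmax⟩ := G.exists_max_image (· j) hfin hne
  obtain ⟨g', hg', hmin⟩ := G.exists_min_image (· j) hfin hne
  have h₁ : g j + v j ≤ g j := hmax _ (hv g hg)
  have h₂ : g' j ≤ g' j + v j := hmin _ (hv g' hg')
  exact le_antisymm (by simpa using h₁) (by simpa using h₂)

theorem ZMod.add_natCast_add_one_ne_self {L j : ℕ} (hj : j + 1 < L) (r : ZMod L) :
    r + j + 1 ≠ r := by
  intro h
  have : ((j + 1 : ℕ) : ZMod L) = 0 := by push_cast; linear_combination h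
  exact Nat.not_dvd_of_pos_of_lt j.succ_pos hj ((ZMod.natCast_eq_zero_iff _ _).mp this)

namespace SimpleGraph

variable {V : Type*} {G : SimpleGraph V}

theorem Connected.exists_closedWalk_forall_mem_support [Fintype V] (hG : G.Connected)
    (x : V) :
    ∃ W : G.Walk x x, (∀ y, y ∈ W.support) ∧ W.length ≤ 2 * G.diam * Fintype.card V := by
  have : Nonempty V := hG.nonempty
  have hdiam : G.ediam ≠ ⊤ := connected_iff_ediam_ne_top.mp hG
  have key : ∀ l : List V, ∃ W : G.Walk x x, (∀ y ∈ l, y ∈ W.support) ∧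
      W.length ≤ 2 * G.diam * l.length := by
    intro l
    induction l with
    | nil => exact ⟨Walk.nil, by simp, by simp⟩
    | cons y l ih =>
      obtain ⟨W, hW, hlen⟩ := ih
      obtain ⟨P, hP⟩ := hG.exists_walk_length_eq_dist x y
      have hPle : P.length ≤ G.diam := hP ▸ dist_le_diam hdiam
      refine ⟨(P.append P.reverse).append W, ?_, ?_⟩
      · rintro z (_ | ⟨_, hz⟩)
        · simp
        · simp [hW z hz]
      · simp only [Walk.length_append, Walk.length_reverse, List.length_cons]
        nlinarith
  obtain ⟨W, hW, hlen⟩ := key Finset.univ.toList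
  exact ⟨W, fun y => hW y (by simp), by simpa using hlen⟩

end SimpleGraph

section Lattice

variable {d : ℕ}

theorem manhattan_zero : manhattan (0 : Fin d → ℤ) = 0 := by
  simp [manhattan]

theorem manhattan_sub_comm (p q : Fin d → ℤ) : manhattan (p - q) = manhattan (q - p) := by
  simp only [manhattan, Pi.sub_apply, abs_sub_comm]

theorem exists_eq_single_of_manhattan_eq_one {s : Fin d → ℤ} (hs : manhattan s = 1) :
    ∃ i, ∃ u : ℤˣ, s = Pi.single i (u : ℤ) := by
  obtain ⟨i, hi⟩ : ∃ i, s i ≠ 0 := by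
    by_contra! h
    simp [manhattan, h] at hs
  have hsplit := Finset.add_sum_erase Finset.univ (fun j => |s j|) (Finset.mem_univ i)
  have hrest_nonneg : 0 ≤ ∑ j ∈ Finset.univ.erase i, |s j| :=
    Finset.sum_nonneg fun j _ => abs_nonneg _
  have hsi : |s i| = 1 := by
    have := Int.one_le_abs hi
    rw [manhattan] at hs
    omega
  have hrest : ∀ j ≠ i, s j = 0 := by
    intro j hj
    have hzero : ∑ j ∈ Finset.univ.erase i, |s j| = 0 := by
      rw [manhattan] at hs
      omega
    rw [Finset.sum_eq_zero_iff_of_nonneg fun j _ => abs_nonneg _] at hzero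
    exact abs_eq_zero.mp (hzero j (Finset.mem_erase.mpr ⟨hj, Finset.mem_univ j⟩))
  refine ⟨i, (Int.isUnit_iff_abs_eq.mpr hsi).unit, funext fun j => ?_⟩
  by_cases hj : j = i
  · subst hj; simp
  · simp [hj, hrest j hj]

theorem zero_mem_sense_iff {G : Set (Fin d → ℤ)} {V : ℕ} {p : Fin d → ℤ} :
    0 ∈ sense G V p ↔ p ∈ G := by
  simp [sense, manhattan_zero]

def unitStep : Option (Fin d × ℤˣ) → (Fin d → ℤ)
  | none => 0
  | some (i, u) => Pi.single i (u : ℤ)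

theorem exists_sum_unitStep_of_walk {G : Set (Fin d → ℤ)} {x y : G}
    (p : (latticeGraph G).Walk x y) {n : ℕ} (hn : p.length ≤ n) :
    ∃ c : Fin n → Option (Fin d × ℤˣ), (y : Fin d → ℤ) = x + ∑ j, unitStep (c j) := by
  induction p generalizing n with
  | nil => exact ⟨fun _ => none, by simp [unitStep]⟩
  | @cons x x' y hadj p ih =>
    cases n with
    | zero => simp at hn
    | succ n =>
      obtain ⟨c, hc⟩ := ih (n := n) (by simpa using hn)
      obtain ⟨i, u, hiu⟩ := exists_eq_single_of_manhattan_eq_one hadj.symm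
      refine ⟨Fin.cons (some (i, u)) c, ?_⟩
      rw [Fin.sum_univ_succ, hc, Fin.cons_zero, unitStep, ← hiu]
      simp only [Fin.cons_succ]
      abel

theorem card_le_pow_diam {G : Set (Fin d → ℤ)} (hfin : G.Finite)
    (hconn : (latticeGraph G).Connected) :
    Nat.card G ≤ (2 * d + 1) ^ (latticeGraph G).diam := by
  have : Fintype G := hfin.fintype
  have : Nonempty G := hconn.nonempty
  obtain ⟨x⟩ := hconn.nonempty
  set D := (latticeGraph G).diam
  have hdiam : (latticeGraph G).ediam ≠ ⊤ := SimpleGraph.connected_iff_ediam_ne_top.mp hconn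
  have hsub : G ⊆ Set.range fun c : Fin D → Option (Fin d × ℤˣ) =>
      (x : Fin d → ℤ) + ∑ j, unitStep (c j) := by
    intro y hy
    obtain ⟨P, hP⟩ := hconn.exists_walk_length_eq_dist x ⟨y, hy⟩
    obtain ⟨c, hc⟩ := exists_sum_unitStep_of_walk P (hP ▸ SimpleGraph.dist_le_diam hdiam)
    exact ⟨c, hc.symm⟩
  calc Nat.card G ≤ Nat.card (Set.range fun c : Fin D → Option (Fin d × ℤˣ) =>
          (x : Fin d → ℤ) + ∑ j, unitStep (c j)) := Nat.card_mono (Set.finite_range _) hsub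
    _ ≤ Nat.card (Fin D → Option (Fin d × ℤˣ)) := Finite.card_range_le _
    _ = (2 * d + 1) ^ D := by
      simp [Nat.card_eq_fintype_card, Fintype.card_units_int, mul_comm]

theorem manhattan_getVert_succ_sub_le {G : Set (Fin d → ℤ)} {x y : G}
    (W : (latticeGraph G).Walk x y) (j : ℕ) :
    manhattan ((W.getVert (j + 1) : Fin d → ℤ) - (W.getVert j : Fin d → ℤ)) ≤ 1 := by
  rcases lt_or_ge j W.length with hj | hj
  · exact (manhattan_sub_comm _ _).trans (W.adj_getVert_succ hj) |>.le
  · rw [W.getVert_of_length_le hj, W.getVert_of_length_le (by omega), sub_self, manhattan_zero]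
    exact zero_le_one

theorem exists_tour {G : Set (Fin d → ℤ)} (hfin : G.Finite)
    (hconn : (latticeGraph G).Connected) :
    ∃ n ≤ 2 * (latticeGraph G).diam * Nat.card G, ∃ w : ZMod (n + 1) → (Fin d → ℤ),
      (∀ k, manhattan (w (k + 1) - w k) ≤ 1) ∧ Set.range w = G := by
  have : Fintype G := hfin.fintype
  obtain ⟨x⟩ := hconn.nonempty
  obtain ⟨W, hW, hlen⟩ := hconn.exists_closedWalk_forall_mem_support x
  refine ⟨W.length, by rwa [Nat.card_eq_fintype_card], fun k => W.getVert k.val, fun k => ?_, ?_⟩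
  · have hval : (k + 1).val = (k.val + 1) % (W.length + 1) := by
      rw [ZMod.val_add, ZMod.val_one_eq_one_mod, Nat.add_mod_mod]
    -- the last step of `w`, from `W.getVert W.length = x` to `W.getVert 0 = x`, is a stay
    have hwrap : W.getVert ((k.val + 1) % (W.length + 1)) = W.getVert (k.val + 1) := by
      rcases (Nat.lt_succ_iff.mp (ZMod.val_lt k)).lt_or_eq with hk | hk
      · rw [Nat.mod_eq_of_lt (by omega)]
      · rw [hk, Nat.mod_self, W.getVert_zero, W.getVert_of_length_le le_self_add]
    simpa only [hval, hwrap] using manhattan_getVert_succ_sub_le W k.val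
  · refine subset_antisymm (Set.range_subset_iff.mpr fun k => (W.getVert k.val).2) fun g hg => ?_
    obtain ⟨i, hi, hile⟩ := SimpleGraph.Walk.mem_support_iff_exists_getVert.mp (hW ⟨g, hg⟩)
    exact ⟨i, by simp [ZMod.val_cast_of_lt (Nat.lt_succ_of_le hile), hi]⟩

end Lattice

section Machine

variable {d : ℕ} {σ : Type*}

/-- The transition of `Agent.traj` (sensing range 1), for memory in an arbitrary type `σ`. -/
def machineStep (f : Set (Fin d → ℤ) → σ → (Fin d → ℤ) × σ) (G : Set (Fin d → ℤ))
    (z : (Fin d → ℤ) × σ) : (Fin d → ℤ) × σ :=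
  (z.1 + (f (sense G 1 z.1) z.2).1, (f (sense G 1 z.1) z.2).2)

def MachineValid (f : Set (Fin d → ℤ) → σ → (Fin d → ℤ) × σ) (G : Set (Fin d → ℤ)) : Prop :=
  ∀ p ∈ G, ∀ s, manhattan (f (sense G 1 p) s).1 ≤ 1 ∧ p + (f (sense G 1 p) s).1 ∈ G

def MachineCovers (f : Set (Fin d → ℤ) → σ → (Fin d → ℤ) × σ) (G : Set (Fin d → ℤ))
    (z : (Fin d → ℤ) × σ) : Prop :=
  ∀ g ∈ G, ∃ t, ((machineStep f G)^[t] z).1 = g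

variable {f : Set (Fin d → ℤ) → σ → (Fin d → ℤ) × σ} {G : Set (Fin d → ℤ)}

theorem MachineValid.iterate_mem (hf : MachineValid f G) {z : (Fin d → ℤ) × σ} (hz : z.1 ∈ G)
    (t : ℕ) : ((machineStep f G)^[t] z).1 ∈ G := by
  induction t with
  | zero => exact hz
  | succ t ih =>
    rw [Function.iterate_succ_apply']
    exact (hf _ ih _).2

theorem MachineCovers.of_iterate {z : (Fin d → ℤ) × σ} {T : ℕ}
    (h : MachineCovers f G ((machineStep f G)^[T] z)) : MachineCovers f G z := by
  intro g hg
  obtain ⟨t, ht⟩ := h g hg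
  exact ⟨t + T, by rwa [Function.iterate_add_apply]⟩

theorem exists_agent_patrolsLazy [Fintype σ] [Nonempty σ] {b : ℕ}
    (hcard : Fintype.card σ ≤ 2 ^ b) (hvalid : MachineValid f G)
    (hcover : ∀ p ∈ G, ∀ s, MachineCovers f G (p, s)) :
    ∃ A : Agent d b, A.PatrolsLazy G 1 := by
  obtain ⟨e⟩ := Function.Embedding.nonempty_of_card_le (β := Fin b → Bool) (by simpa using hcard)
  set dec := Function.invFun e
  have hdec : ∀ s, dec (e s) = s := Function.leftInverse_invFun e.injective
  let A : Agent d b := ⟨fun S m => ((f S (dec m)).1, e (f S (dec m)).2)⟩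
  have htraj : ∀ v m t,
      Prod.map id dec (A.traj G 1 v m t) = (machineStep f G)^[t] (v, dec m) := by
    intro v m t
    induction t with
    | zero => rfl
    | succ t ih =>
      rw [Function.iterate_succ_apply', ← ih]
      simp [Agent.traj, machineStep, A, hdec]
  refine ⟨A, fun p hp m => hvalid p hp (dec m), fun v hv m g hg => ?_⟩
  obtain ⟨t, ht⟩ := hcover v hv (dec m) g hg
  exact ⟨t, by rw [← ht, ← htraj]; rfl⟩

theorem patrolsLazy_stay {b : ℕ} {V : ℕ} (hG : G.Subsingleton) :
    (⟨fun _ m => (0, m)⟩ : Agent d b).PatrolsLazy G V :=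
  ⟨fun p hp _ => by simpa [manhattan_zero], fun _ hv _ _ hg => ⟨0, hG hv hg⟩⟩

end Machine

section TourMachine

open scoped Classical

variable {d L : ℕ}

/-- Memory `(r, k, probing)`: the agent conjectures that the current probe started at the tour
point `w r` and that it now stands at `w k`.  On a disagreement between sensing and conjecture it
retraces the tour back to the start of the probe (guarded by sensing, so that every memory state
is safe) and then probes the conjecture `r + 1`. -/
noncomputable def tourMachine (G : Set (Fin d → ℤ)) (w : ZMod L → (Fin d → ℤ))
    (S : Set (Fin d → ℤ)) : ZMod L × ZMod L × Bool → (Fin d → ℤ) × (ZMod L × ZMod L × Bool)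
  | (r, k, true) =>
    if S = sense G 1 (w k) then (w (k + 1) - w k, (r, k + 1, true)) else (0, (r, k, false))
  | (r, k, false) =>
    if k = r then (0, (r + 1, r + 1, true))
    else if w (k - 1) - w k ∈ S then (w (k - 1) - w k, (r, k - 1, false))
    else (0, (r + 1, r + 1, true))

variable {G : Set (Fin d → ℤ)} {w : ZMod L → (Fin d → ℤ)}

theorem tourMachine_valid (hstep : ∀ k, manhattan (w (k + 1) - w k) ≤ 1)
    (hrange : Set.range w = G) : MachineValid (tourMachine G w) G := by
  intro p hp ⟨r, k, probing⟩
  have hstay : manhattan (0 : Fin d → ℤ) ≤ 1 ∧ p + 0 ∈ G := by simpa [manhattan_zero] using hp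
  cases probing with
  | true =>
    dsimp only [tourMachine]
    split_ifs with hS
    · have hmem : w (k + 1) - w k ∈ sense G 1 (w k) :=
        ⟨by simp [← hrange], hstep k⟩
      exact ⟨hstep k, (hS ▸ hmem).1⟩
    · exact hstay
  | false =>
    dsimp only [tourMachine]
    split_ifs with hkr hmem
    · exact hstay
    · exact ⟨hmem.2, hmem.1⟩
    · exact hstay

local notation "step" => machineStep (tourMachine G w) G

theorem tourMachine_probe {r k : ZMod L} {v : Fin d → ℤ} {t : ℕ}
    (hmatch : ∀ i < t, sense G 1 (w (k + i) + v) = sense G 1 (w (k + i))) :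
    step^[t] (w k + v, (r, k, true)) = (w (k + t) + v, (r, k + t, true)) := by
  induction t with
  | zero => simp
  | succ t ih =>
    rw [Function.iterate_succ_apply', ih fun i hi => hmatch i (by omega)]
    simp only [machineStep, tourMachine, if_pos (hmatch t (by omega)), Nat.cast_succ, add_assoc]
    congr 1
    abel

theorem tourMachine_backtrack_terminates {r : ZMod L} {j : ℕ} (hj : j < L) {q : Fin d → ℤ}
    (hq : q ∈ G) :
    ∃ T, ∃ q' ∈ G, step^[T] (q, (r, r + j, false)) = (q', (r + 1, r + 1, true)) := by
  induction j generalizing q with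
  | zero => exact ⟨1, q, hq, by simp [machineStep, tourMachine]⟩
  | succ j ih =>
    have hne : r + j + 1 ≠ r := ZMod.add_natCast_add_one_ne_self hj r
    rw [Nat.cast_succ, ← add_assoc]
    by_cases hmem : w (r + j) - w (r + j + 1) ∈ sense G 1 q
    · obtain ⟨T, q', hq', hT⟩ := ih (by omega) hmem.1
      refine ⟨T + 1, q', hq', ?_⟩
      rw [Function.iterate_succ_apply, ← hT]
      simp [machineStep, tourMachine, hne, hmem]
    · exact ⟨1, q, hq, by simp [machineStep, tourMachine, hne, hmem]⟩

theorem tourMachine_backtrack (hstep : ∀ k, manhattan (w (k + 1) - w k) ≤ 1) {r : ZMod L}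
    {v : Fin d → ℤ} {j : ℕ} (hj : j < L) (hmem : ∀ i ≤ j, w (r + i) + v ∈ G) :
    step^[j + 1] (w (r + j) + v, (r, r + j, false)) = (w r + v, (r + 1, r + 1, true)) := by
  induction j with
  | zero => simp [machineStep, tourMachine]
  | succ j ih =>
    have hne : r + j + 1 ≠ r := ZMod.add_natCast_add_one_ne_self hj r
    have hback : w (r + j) - w (r + j + 1) ∈ sense G 1 (w (r + j + 1) + v) := by
      refine ⟨?_, manhattan_sub_comm _ _ ▸ hstep _⟩
      simpa [add_comm] using hmem j (by omega)
    have hfirst : step (w (r + j + 1) + v, (r, r + j + 1, false)) =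
        (w (r + j) + v, (r, r + j, false)) := by
      simp only [machineStep, tourMachine, if_neg hne, add_sub_cancel_right, if_pos hback]
      congr 1
      abel
    rw [Nat.cast_succ, ← add_assoc, Function.iterate_succ_apply, hfirst, ih (by omega)
      fun i hi => hmem i (by omega)]

variable [NeZero L] (hrange : Set.range w = G)
include hrange

theorem eq_zero_of_sense_add_eq (hfin : G.Finite) {k : ZMod L} {v : Fin d → ℤ}
    (hmatch : ∀ i < L, sense G 1 (w (k + i) + v) = sense G 1 (w (k + i))) : v = 0 := by
  subst hrange
  refine eq_zero_of_forall_add_mem hfin (Set.range_nonempty w) ?_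
  rintro _ ⟨j, rfl⟩
  have hj : k + ((j - k).val : ZMod L) = j := by simp
  have := hmatch _ (j - k).val_lt
  rw [hj] at this
  rw [← zero_mem_sense_iff (V := 1), this, zero_mem_sense_iff]
  exact Set.mem_range_self j

theorem tourMachine_covers_of_correct (r k : ZMod L) :
    MachineCovers (tourMachine G w) G (w k, (r, k, true)) := by
  intro g hg
  obtain ⟨j, rfl⟩ := hrange ▸ hg
  refine ⟨(j - k).val, ?_⟩
  rw [← add_zero (w k), tourMachine_probe fun _ _ => by rw [add_zero]]
  simp

theorem tourMachine_offset_eq_zero_or_mismatch (hstep : ∀ k, manhattan (w (k + 1) - w k) ≤ 1)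
    (hfin : G.Finite) {r k : ZMod L} {v : Fin d → ℤ} (hv : w k + v ∈ G) :
    v = 0 ∨ ∃ t < L, step^[t + 1] (w k + v, (r, k, true)) = (w (k + t) + v, (r, k + t, false)) ∧
      ∀ i ≤ t, w (k + i) + v ∈ G := by
  by_cases hall : ∀ i < L, sense G 1 (w (k + i) + v) = sense G 1 (w (k + i))
  · exact Or.inl (eq_zero_of_sense_add_eq hrange hfin hall)
  right
  have hex : ∃ i : ℕ, i < L ∧ sense G 1 (w (k + i) + v) ≠ sense G 1 (w (k + i)) := by
    simpa using hall
  obtain ⟨htL, hmismatch⟩ := Nat.find_spec hex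
  have hmin : ∀ i < Nat.find hex, sense G 1 (w (k + i) + v) = sense G 1 (w (k + i)) :=
    fun i hi => not_not.mp fun hne => Nat.find_min hex hi ⟨by omega, hne⟩
  refine ⟨Nat.find hex, htL, ?_, fun i hi => ?_⟩
  · rw [Function.iterate_succ_apply', tourMachine_probe hmin]
    simp [machineStep, tourMachine, hmismatch]
  · have := (tourMachine_valid hstep hrange).iterate_mem (z := (w k + v, (r, k, true))) hv i
    rwa [tourMachine_probe fun i' hi' => hmin i' (by omega)] at this

theorem tourMachine_probe_round (hstep : ∀ k, manhattan (w (k + 1) - w k) ≤ 1) (hfin : G.Finite)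
    {p : Fin d → ℤ} (hp : p ∈ G) (r : ZMod L) :
    MachineCovers (tourMachine G w) G (p, (r, r, true)) ∨
      ∃ T, step^[T] (p, (r, r, true)) = (p, (r + 1, r + 1, true)) := by
  obtain ⟨v, rfl⟩ : ∃ v, p = w r + v := ⟨p - w r, by abel⟩
  rcases tourMachine_offset_eq_zero_or_mismatch hrange hstep hfin hp with
    rfl | ⟨t, htL, hprobe, hmem⟩
  · exact Or.inl (by simpa using tourMachine_covers_of_correct hrange r r)
  · refine Or.inr ⟨(t + 1) + (t + 1), ?_⟩
    rw [Function.iterate_add_apply, hprobe, tourMachine_backtrack hstep htL hmem]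

theorem tourMachine_covers_of_probe_start (hstep : ∀ k, manhattan (w (k + 1) - w k) ≤ 1)
    (hfin : G.Finite) {p : Fin d → ℤ} (hp : p ∈ G) (r : ZMod L) :
    MachineCovers (tourMachine G w) G (p, (r, r, true)) := by
  have hrounds : ∀ n : ℕ, MachineCovers (tourMachine G w) G (p, (r, r, true)) ∨
      ∃ T, step^[T] (p, (r, r, true)) = (p, (r + n, r + n, true)) := by
    intro n
    induction n with
    | zero => exact Or.inr ⟨0, by simp⟩
    | succ n ih =>
      obtain hcov | ⟨T, hT⟩ := ih
      · exact Or.inl hcov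
      obtain hcov | ⟨T', hT'⟩ := tourMachine_probe_round hrange hstep hfin hp (r + n)
      · exact Or.inl (.of_iterate (hT ▸ hcov))
      · refine Or.inr ⟨T' + T, ?_⟩
        rw [Function.iterate_add_apply, hT, hT', Nat.cast_succ, add_assoc]
  obtain ⟨j, rfl⟩ := hrange ▸ hp
  obtain hcov | ⟨T, hT⟩ := hrounds (j - r).val
  · exact hcov
  · refine .of_iterate (T := T) ?_
    simpa [hT] using tourMachine_covers_of_correct hrange j j

theorem tourMachine_reaches_probe_start (hstep : ∀ k, manhattan (w (k + 1) - w k) ≤ 1)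
    (hfin : G.Finite) {p : Fin d → ℤ} (hp : p ∈ G) (s : ZMod L × ZMod L × Bool) :
    MachineCovers (tourMachine G w) G (p, s) ∨
      ∃ T, ∃ q ∈ G, ∃ r, step^[T] (p, s) = (q, (r, r, true)) := by
  obtain ⟨r, k, probing⟩ := s
  obtain ⟨j, hj, rfl⟩ : ∃ j < L, k = r + j := ⟨(k - r).val, (k - r).val_lt, by simp⟩
  cases probing with
  | false =>
    obtain ⟨T, q, hq, hT⟩ := tourMachine_backtrack_terminates hj hp (r := r)
    exact Or.inr ⟨T, q, hq, r + 1, hT⟩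
  | true =>
    obtain ⟨v, rfl⟩ : ∃ v, p = w (r + j) + v := ⟨p - w (r + j), by abel⟩
    rcases tourMachine_offset_eq_zero_or_mismatch hrange hstep hfin hp with
      rfl | ⟨t, -, hprobe, hmem⟩
    · exact Or.inl (by simpa using tourMachine_covers_of_correct hrange r (r + j))
    obtain ⟨i, hi, hki⟩ : ∃ i < L, r + j + t = r + i :=
      ⟨(r + j + t - r).val, ZMod.val_lt _, by simp⟩
    obtain ⟨T, q, hq, hT⟩ := tourMachine_backtrack_terminates hi (hmem t le_rfl) (r := r)
    refine Or.inr ⟨T + (t + 1), q, hq, r + 1, ?_⟩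
    rw [Function.iterate_add_apply, hprobe, ← hT, hki]

theorem tourMachine_covers (hstep : ∀ k, manhattan (w (k + 1) - w k) ≤ 1) (hfin : G.Finite)
    {p : Fin d → ℤ} (hp : p ∈ G) (s : ZMod L × ZMod L × Bool) :
    MachineCovers (tourMachine G w) G (p, s) := by
  obtain hcov | ⟨T, q, hq, r, hT⟩ := tourMachine_reaches_probe_start hrange hstep hfin hp s
  · exact hcov
  · exact .of_iterate (hT ▸ tourMachine_covers_of_probe_start hrange hstep hfin hq r)

end TourMachine

theorem two_mul_succ_sq_le_two_pow {d D n : ℕ} (hD : 1 ≤ D) (hn : n ≤ 2 * D * (2 * d + 1) ^ D) :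
    2 * (n + 1) ^ 2 ≤ 2 ^ (7 * D * (Nat.log 2 (2 * d) + 1)) := by
  set K := Nat.log 2 (2 * d) + 1
  have hK : 2 * d + 1 ≤ 2 ^ K := Nat.lt_pow_succ_log_self one_lt_two _
  have hKD : D ≤ K * D := Nat.le_mul_of_pos_left D (Nat.succ_pos _)
  have hsize : n + 1 ≤ 2 ^ (3 * (K * D)) :=
    calc n + 1 ≤ (2 * D + 1) * (2 * d + 1) ^ D := by
          nlinarith [Nat.one_le_pow D (2 * d + 1) (by omega)]
      _ ≤ 2 ^ (2 * (K * D)) * (2 ^ K) ^ D := by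
        gcongr
        · calc 2 * D + 1 ≤ 2 ^ (2 * D) := Nat.lt_two_pow_self
            _ ≤ 2 ^ (2 * (K * D)) := Nat.pow_le_pow_right two_pos (by omega)
      _ = 2 ^ (3 * (K * D)) := by ring
  calc 2 * (n + 1) ^ 2 ≤ 2 ^ (K * D) * (2 ^ (3 * (K * D))) ^ 2 := by
        gcongr
        calc 2 = 2 ^ 1 := rfl
          _ ≤ 2 ^ (K * D) := Nat.pow_le_pow_right two_pos (by omega)
    _ = 2 ^ (7 * D * K) := by ring

theorem natLog_add_one_le_two_mul_logb {d : ℕ} (hd : 1 ≤ d) :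
    ((Nat.log 2 (2 * d) + 1 : ℕ) : ℝ) ≤ 2 * Real.logb 2 (2 * d) := by
  have hlog : 1 ≤ Nat.log 2 (2 * d) := Nat.le_log_of_pow_le one_lt_two (by omega)
  have hle := Real.natLog_le_logb (2 * d) 2
  push_cast at hle ⊢
  have : (1 : ℝ) ≤ Nat.log 2 (2 * d) := by exact_mod_cast hlog
  linarith

/-- There is a constant `C > 0` such that for every `d ≥ 1` and
every finite connected `G ⊆ ℤ^d`, there is an agent algorithm with sensing range
`V = 1`, at most `C · diam(G) · log₂(2d)` bits of memory, and steps of Manhattan norm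
at most 1 (the agent may stay in place), that patrols `G`. -/
theorem patrol_general_subgraph_diam_log_bits :
    ∃ C : ℝ, 0 < C ∧ ∀ d : ℕ, 1 ≤ d → ∀ G : Set (Fin d → ℤ),
      G.Finite → (latticeGraph G).Connected →
      ∃ b : ℕ, (b : ℝ) ≤ C * (latticeGraph G).diam * Real.logb 2 (2 * d) ∧
        ∃ A : Agent d b, A.PatrolsLazy G 1 := by
  refine ⟨14, by norm_num, fun d hd G hfin hconn => ?_⟩
  set D := (latticeGraph G).diam
  refine ⟨7 * D * (Nat.log 2 (2 * d) + 1), ?_, ?_⟩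
  · have := natLog_add_one_le_two_mul_logb hd
    push_cast at this ⊢
    nlinarith [(Nat.cast_nonneg D : (0 : ℝ) ≤ D)]
  rcases G.subsingleton_or_nontrivial with hG | hG
  · exact ⟨_, patrolsLazy_stay hG⟩
  have : Finite G := hfin
  have : Nontrivial G := Set.nontrivial_coe_sort.mpr hG
  have hD : 1 ≤ D := Nat.one_le_iff_ne_zero.mpr (SimpleGraph.connected_iff_diam_ne_zero.mp hconn)
  obtain ⟨n, hn, w, hstep, hrange⟩ := exists_tour hfin hconn
  refine exists_agent_patrolsLazy (σ := ZMod (n + 1) × ZMod (n + 1) × Bool) ?_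
    (tourMachine_valid hstep hrange) fun p hp => tourMachine_covers hrange hstep hfin hp
  have hcard := card_le_pow_diam hfin hconn
  calc Fintype.card (ZMod (n + 1) × ZMod (n + 1) × Bool) = 2 * (n + 1) ^ 2 := by
        simp only [Fintype.card_prod, ZMod.card, Fintype.card_bool]; ring
    _ ≤ _ := two_mul_succ_sq_le_two_pow hD (hn.trans (by gcongr))
end

section
/- Let G ⊆ ℤ^d be a finite connected set with at least 3 points, regarded as a graph with edges between points at Manhattan distance 1, and let V ≥ 1. If some agent algorithm with 0 bits of memory and sensing range V patrols G, then G has a Hamiltonian cycle. -/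
open Finset

/-!
Without memory the agent's move depends only on its position, so it is a map `f : G → G` along
edges. Patrolling forces every orbit of `f` to cover `G`, so `f` cycles through all of `G` with
minimal period `|G|`, and following it once around is a closed walk visiting every vertex once;
with at least three vertices this walk is a cycle, hence a Hamiltonian cycle.
-/

open SimpleGraph Function

namespace SimpleGraph

variable {α : Type*} (H : SimpleGraph α) {f : α → α}

def iterateWalk (hf : ∀ x, H.Adj x (f x)) : (x : α) → (n : ℕ) → H.Walk x (f^[n] x)
  | _, 0 => .nil
  | x, n + 1 => .cons (hf x) (iterateWalk hf (f x) n)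

variable {H}

lemma support_iterateWalk (hf : ∀ x, H.Adj x (f x)) (x : α) (n : ℕ) :
    (H.iterateWalk hf x n).support = (List.range (n + 1)).map (f^[·] x) := by
  induction n generalizing x with
  | zero => simp [iterateWalk]
  | succ n ih =>
    show x :: (H.iterateWalk hf (f x) n).support = _
    rw [ih, List.range_succ_eq_map (n := n + 1)]
    simp [Function.comp_def, iterate_succ_apply]

lemma isPath_iterateWalk (hf : ∀ x, H.Adj x (f x)) {x : α} {n : ℕ}
    (hn : n < minimalPeriod f x) : (H.iterateWalk hf x n).IsPath := by
  rw [Walk.isPath_def, support_iterateWalk]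
  refine List.Nodup.map_on (fun i hi j hj hij => ?_) List.nodup_range
  rw [List.mem_range] at hi hj
  exact iterate_injOn_Iio_minimalPeriod (Set.mem_Iio.2 (by omega)) (Set.mem_Iio.2 (by omega)) hij

lemma mem_support_iterateWalk (hf : ∀ x, H.Adj x (f x)) {x : α} (hx : x ∈ periodicPts f)
    (n : ℕ) : f^[n] x ∈ (H.iterateWalk hf x (minimalPeriod f x - 1)).support := by
  have hpos := minimalPeriod_pos_of_mem_periodicPts hx
  rw [support_iterateWalk, List.mem_map]
  exact ⟨n % minimalPeriod f x, List.mem_range.2 (by have := Nat.mod_lt n hpos; omega),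
    iterate_mod_minimalPeriod_eq⟩

lemma Walk.IsHamiltonian.isHamiltonianCycle_cons [Fintype α] [DecidableEq α] {u v : α}
    {p : H.Walk u v} (hp : p.IsHamiltonian) (h : H.Adj v u) (hcard : 3 ≤ Fintype.card α) :
    (Walk.cons h p).IsHamiltonianCycle := by
  have hlen : (Walk.cons h p).length = Fintype.card α := by
    rw [Walk.length_cons, hp.length_eq]
    omega
  refine Walk.isHamiltonianCycle_iff_isCycle_and_length_eq.2 ⟨?_, hlen⟩
  refine Walk.isCycle_iff_isPath_tail_and_le_length.2 ⟨?_, hlen ▸ hcard⟩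
  simpa [Walk.tail_cons] using hp.isPath

theorem exists_isHamiltonianCycle_of_forall_iterate_eq [Fintype α] [DecidableEq α]
    (hf : ∀ x, H.Adj x (f x)) (horb : ∀ x y, ∃ n, f^[n] x = y)
    (hcard : 3 ≤ Fintype.card α) :
    ∃ (v : α) (c : H.Walk v v), c.IsHamiltonianCycle := by
  obtain ⟨x⟩ : Nonempty α := Fintype.card_pos_iff.1 (by omega)
  have hx : x ∈ periodicPts f := by
    obtain ⟨n, hn⟩ := horb (f x) x
    exact mk_mem_periodicPts n.succ_pos hn
  set N := minimalPeriod f x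
  have hpos : 0 < N := minimalPeriod_pos_of_mem_periodicPts hx
  have hclose : H.Adj (f^[N - 1] x) x := by
    simpa [← iterate_succ_apply' f, Nat.sub_add_cancel hpos, N] using hf (f^[N - 1] x)
  have hham : (H.iterateWalk hf x (N - 1)).IsHamiltonian := by
    refine (isPath_iterateWalk hf (by omega)).isHamiltonian_of_mem fun y => ?_
    obtain ⟨n, rfl⟩ := horb x y
    exact mem_support_iterateWalk hf hx n
  exact ⟨_, _, hham.isHamiltonianCycle_cons hclose hcard⟩

end SimpleGraph

namespace Agent

variable {d : ℕ} {D : Set (Fin d → ℤ)} {V : ℕ}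

def next (A : Agent d 0) (hA : A.Valid D V) (p : D) : D :=
  ⟨p.1 + (A.act (sense D V p) default).1, (hA p p.2 default).2.1⟩

lemma latticeGraph_adj_next {A : Agent d 0} (hA : A.Valid D V) (p : D) :
    (latticeGraph D).Adj p (A.next hA p) := by
  refine SimpleGraph.adj_symm _ ?_
  change manhattan (p.1 + _ - p.1) = 1
  simpa using (hA p p.2 default).1

lemma traj_fst_eq_iterate_next {A : Agent d 0} (hA : A.Valid D V) (p : D)
    (m : Fin 0 → Bool) (t : ℕ) : (A.traj D V p m t).1 = ((A.next hA)^[t] p).1 := by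
  induction t with
  | zero => rfl
  | succ t ih =>
    rw [iterate_succ_apply', traj, Subsingleton.elim (A.traj D V p m t).2 default, ih]
    rfl

lemma Patrols.forall_iterate_next_eq {A : Agent d 0} (hA : A.Patrols D V) (p q : D) :
    ∃ t, (A.next hA.1)^[t] p = q := by
  obtain ⟨t, ht⟩ := hA.2 p p.2 default q q.2
  exact ⟨t, Subtype.ext (traj_fst_eq_iterate_next hA.1 p default t ▸ ht)⟩

end Agent

theorem hamiltonian_of_zero_bit_patrol_general {d : ℕ}
    (G : Set (Fin d → ℤ)) (hfin : G.Finite) (hcard : 3 ≤ G.ncard)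
    (V : ℕ)
    (A : Agent d 0) (hA : A.Patrols G V) :
    ∃ (v : G) (c : (latticeGraph G).Walk v v), c.IsHamiltonianCycle := by
  have := hfin.fintype
  have hcard' : 3 ≤ Fintype.card G := by
    rwa [← Nat.card_eq_fintype_card, Nat.card_coe_set_eq]
  exact exists_isHamiltonianCycle_of_forall_iterate_eq (Agent.latticeGraph_adj_next hA.1)
    hA.forall_iterate_next_eq hcard'

/-- Let `G ⊆ ℤ^d` be finite and connected with at least 3 points,
and let `V ≥ 1`. If some agent algorithm with `0` bits of memory and sensing range `V`
patrols `G`, then `G` has a Hamiltonian cycle. -/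
theorem hamiltonian_of_zero_bit_patrol {d : ℕ} (hd : 1 ≤ d)
    (G : Set (Fin d → ℤ)) (hfin : G.Finite) (hcard : 3 ≤ G.ncard)
    (hconn : (latticeGraph G).Connected) (V : ℕ) (hV : 1 ≤ V)
    (A : Agent d 0) (hA : A.Patrols G V) :
    ∃ (v : G) (c : (latticeGraph G).Walk v v), c.IsHamiltonianCycle :=
  hamiltonian_of_zero_bit_patrol_general G hfin hcard V A hA
end
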